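/- Let k be a field, n ≥ 1, m ≥ 1, and let L be the k-vector space with basis {x_{i,j} : 1 ≤ i ≤ m, j ∈ ℤ/nℤ} with bracket [x_{i,j}, x_{k,ℓ}] = δ^ℓ_{i+j}·x_{i+k,j} − δ^j_{k+ℓ}·x_{i+k,ℓ} if i+k ≤ m and 0 otherwise (δ^a_b = 1 iff a ≡ b mod n; x_{s,t} = 0 if s > m). Then the Jacobi identity holds: [x_{a,b},[x_{c,d},x_{e,f}]] + [x_{c,d},[x_{e,f},x_{a,b}]] + [x_{e,f},[x_{a,b},x_{c,d}]] = 0 for all basis elements. -/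
import Mathlib


/-- The basis vector `x_{i,j}` of Ravenel's Lie algebra `L(n,m)` (interpreted as `0`
when the first index is out of the range `1 ≤ i ≤ m`). -/
noncomputable def ravenelX (k : Type*) [Field k] (n m : ℕ) (i : ℕ) (j : ZMod n) :
    (ℕ × ZMod n) →₀ k :=
  if 1 ≤ i ∧ i ≤ m then Finsupp.single (i, j) 1 else 0

/-- The bracket `[x_{i,j}, x_{i',j'}] = δ^{j'}_{i+j} x_{i+i',j} − δ^{j}_{i'+j'} x_{i+i',j'}`
for `i + i' ≤ m`, and `0` for `i + i' > m`, where `δ^a_b = 1` iff `a ≡ b mod n`. -/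
noncomputable def ravenelBracketAux (k : Type*) [Field k] (n m : ℕ)
    (i : ℕ) (j : ZMod n) (i' : ℕ) (j' : ZMod n) : (ℕ × ZMod n) →₀ k :=
  if i + i' ≤ m then
    (if (i : ZMod n) + j = j' then ravenelX k n m (i + i') j else 0)
      - (if (i' : ZMod n) + j' = j then ravenelX k n m (i + i') j' else 0)
  else 0

/-- The bilinear extension of the bracket on basis elements. -/
noncomputable def ravenelBracket (k : Type*) [Field k] (n m : ℕ) :
    ((ℕ × ZMod n) →₀ k) →ₗ[k] ((ℕ × ZMod n) →₀ k) →ₗ[k] ((ℕ × ZMod n) →₀ k) :=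
  Finsupp.lsum k fun a =>
    LinearMap.toSpanSingleton k _
      (Finsupp.lsum k fun b =>
        LinearMap.toSpanSingleton k _ (ravenelBracketAux k n m a.1 a.2 b.1 b.2))

lemma ravenelBracket_X_X (k : Type*) [Field k] (n m : ℕ) (a c : ℕ) (b d : ZMod n)
    (ha1 : 1 ≤ a) (ha2 : a ≤ m) (hc1 : 1 ≤ c) :
    ravenelBracket k n m (ravenelX k n m a b) (ravenelX k n m c d)
      = ravenelBracketAux k n m a b c d := by
  by_cases hc2 : c ≤ m
  · rw [ravenelX, ravenelX, if_pos ⟨ha1, ha2⟩, if_pos ⟨hc1, hc2⟩, ravenelBracket]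
    simp [Finsupp.lsum_single, LinearMap.toSpanSingleton_apply]
  · have h0 : ravenelX k n m c d = 0 := by rw [ravenelX]; exact if_neg (by tauto)
    rw [h0, map_zero, ravenelBracketAux, if_neg (by omega)]

lemma ravenelBracket_X_Aux (k : Type*) [Field k] (n m : ℕ) (a c e : ℕ) (b d f : ZMod n)
    (ha1 : 1 ≤ a) (ha2 : a ≤ m) (hc1 : 1 ≤ c) (he1 : 1 ≤ e) :
    ravenelBracket k n m (ravenelX k n m a b) (ravenelBracketAux k n m c d e f)
      = if c + e ≤ m then
          (if (c : ZMod n) + d = f then ravenelBracketAux k n m a b (c + e) d else 0)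
            - (if (e : ZMod n) + f = d then ravenelBracketAux k n m a b (c + e) f else 0)
        else 0 := by
  rw [ravenelBracketAux]
  by_cases hce : c + e ≤ m
  · rw [if_pos hce, if_pos hce, map_sub]
    congr 1 <;> split_ifs <;>
      first
        | exact ravenelBracket_X_X k n m a (c + e) b _ ha1 ha2 (by omega)
        | exact map_zero _
  · rw [if_neg hce, if_neg hce, map_zero]

lemma ravenel_ite_sub {M : Type*} [AddCommGroup M] {P : Prop} [Decidable P] (x y : M) :
    (if P then x - y else 0) = (if P then x else 0) - (if P then y else 0) := by
  split_ifs <;> simp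

lemma ravenel_key {R M : Type*} [CommRing R] [DecidableEq R] [AddCommGroup M]
    (A C E b d f : R) (Y : R → M) :
  ((if C+d=f then (if A+b=d then Y b else 0) - (if (C+E)+d=b then Y d else 0) else 0)
   - (if E+f=d then (if A+b=f then Y b else 0) - (if (C+E)+f=b then Y f else 0) else 0))
  + ((if E+f=b then (if C+d=f then Y d else 0) - (if (E+A)+f=d then Y f else 0) else 0)
   - (if A+b=f then (if C+d=b then Y d else 0) - (if (E+A)+b=d then Y b else 0) else 0))
  + ((if A+b=d then (if E+f=b then Y f else 0) - (if (A+C)+b=f then Y b else 0) else 0)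
   - (if C+d=b then (if E+f=d then Y f else 0) - (if (A+C)+d=f then Y d else 0) else 0)) = 0 := by
  have e1 : (C+d=f ∧ A+b=d) ↔ (A+b=d ∧ (A+C)+b=f) :=
    ⟨fun h => ⟨h.2, by linear_combination h.1 + h.2⟩,
     fun h => ⟨by linear_combination h.2 - h.1, h.1⟩⟩
  have e2 : (E+f=d ∧ A+b=f) ↔ (A+b=f ∧ (E+A)+b=d) :=
    ⟨fun h => ⟨h.2, by linear_combination h.1 + h.2⟩,
     fun h => ⟨by linear_combination h.2 - h.1, h.1⟩⟩
  have e3 : (C+d=f ∧ (C+E)+d=b) ↔ (E+f=b ∧ C+d=f) :=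
    ⟨fun h => ⟨by linear_combination h.2 - h.1, h.1⟩,
     fun h => ⟨h.2, by linear_combination h.1 + h.2⟩⟩
  have e4 : (A+b=f ∧ C+d=b) ↔ (C+d=b ∧ (A+C)+d=f) :=
    ⟨fun h => ⟨h.2, by linear_combination h.1 + h.2⟩,
     fun h => ⟨by linear_combination h.2 - h.1, h.1⟩⟩
  have e5 : (E+f=d ∧ (C+E)+f=b) ↔ (C+d=b ∧ E+f=d) :=
    ⟨fun h => ⟨by linear_combination h.2 - h.1, h.1⟩,
     fun h => ⟨h.2, by linear_combination h.1 + h.2⟩⟩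
  have e6 : (E+f=b ∧ (E+A)+f=d) ↔ (A+b=d ∧ E+f=b) :=
    ⟨fun h => ⟨by linear_combination h.2 - h.1, h.1⟩,
     fun h => ⟨h.2, by linear_combination h.1 + h.2⟩⟩
  simp only [ravenel_ite_sub, ← ite_and]
  simp only [e1, e2, e3, e4, e5, e6]
  abel

/-- The Jacobi identity holds for the bracket of Ravenel's Lie algebra `L(n,m)` on
basis elements. -/
theorem ravenelBracket_jacobi (k : Type*) [Field k] (n m : ℕ) (hn : 1 ≤ n) (hm : 1 ≤ m)
    (a : ℕ) (b : ZMod n) (c : ℕ) (d : ZMod n) (e : ℕ) (f : ZMod n)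
    (ha1 : 1 ≤ a) (ha2 : a ≤ m) (hc1 : 1 ≤ c) (hc2 : c ≤ m) (he1 : 1 ≤ e) (he2 : e ≤ m) :
    ravenelBracket k n m (ravenelX k n m a b)
        (ravenelBracket k n m (ravenelX k n m c d) (ravenelX k n m e f))
      + ravenelBracket k n m (ravenelX k n m c d)
        (ravenelBracket k n m (ravenelX k n m e f) (ravenelX k n m a b))
      + ravenelBracket k n m (ravenelX k n m e f)
        (ravenelBracket k n m (ravenelX k n m a b) (ravenelX k n m c d)) = 0 := by
  rw [ravenelBracket_X_X k n m c e d f hc1 hc2 he1,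
      ravenelBracket_X_X k n m e a f b he1 he2 ha1,
      ravenelBracket_X_X k n m a c b d ha1 ha2 hc1,
      ravenelBracket_X_Aux k n m a c e b d f ha1 ha2 hc1 he1,
      ravenelBracket_X_Aux k n m c e a d f b hc1 hc2 he1 ha1,
      ravenelBracket_X_Aux k n m e a c f b d he1 he2 ha1 hc1]
  by_cases hS : a + c + e ≤ m
  · have h1 : c + e ≤ m := by omega
    have h2 : e + a ≤ m := by omega
    have h3 : a + c ≤ m := by omega
    have h4 : a + (c + e) ≤ m := by omega
    have h5 : c + (e + a) ≤ m := by omega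
    have h6 : e + (a + c) ≤ m := by omega
    simp only [ravenelBracketAux, h1, h2, h3, h4, h5, h6, if_true]
    push_cast
    rw [show a + (c + e) = a + c + e from by omega,
        show c + (e + a) = a + c + e from by omega,
        show e + (a + c) = a + c + e from by omega]
    exact ravenel_key (a : ZMod n) c e b d f (fun t => ravenelX k n m (a + c + e) t)
  · have h4 : ¬ (a + (c + e) ≤ m) := by omega
    have h5 : ¬ (c + (e + a) ≤ m) := by omega
    have h6 : ¬ (e + (a + c) ≤ m) := by omega
    simp only [ravenelBracketAux, h4, h5, h6, if_false]
    simp
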